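/- Let Y = aX + b where X ~ N(ν, ζ) and a > 0, b ∈ ℝ, with an additional independent noise: given X, observations y₁,…,y_M are i.i.d. N(aX + b, a²ς²). Then the marginal log-density of (y₁,…,y_M) equals −(1/2)[M log 2π + (M−1)log(ς²a²) + log(a²Mζ + ς²a²) + ς⁻²a⁻²(s − M⁻¹g²) + (ζ + ς²M⁻¹)⁻¹(g̃ − ν)²], where g = Σₘ yₘ, s = Σₘ yₘ², and g̃ = a⁻¹(M⁻¹g − b). -/

import Mathlib

/-!
Given `X = x`, the likelihood of the sample depends on `y` only through `s` and the sample mean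
`g / M`: it is a constant (in `x`) times the density of `N(a x + b, a²ς² / M)` at `g / M`, which
after the affine change of variable is `a⁻¹` times the density of `N(g̃, ς² / M)` at `x`.
Integrating a product of two Gaussian densities in `x` gives the Gaussian density with the summed
variances, here that of `N(ν, ζ + ς² / M)` at `g̃`, and the logarithm is read off.
-/

open MeasureTheory ProbabilityTheory Real Finset
open scoped NNReal

variable {ι : Type*}

theorem Finset.sum_sub_sq_eq_add_card_mul (s : Finset ι) (y : ι → ℝ) (μ : ℝ) :
    ∑ i ∈ s, (y i - μ) ^ 2
      = (∑ i ∈ s, y i ^ 2 - (#s : ℝ)⁻¹ * (∑ i ∈ s, y i) ^ 2)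
        + #s * ((#s : ℝ)⁻¹ * ∑ i ∈ s, y i - μ) ^ 2 := by
  rcases s.eq_empty_or_nonempty with rfl | hs
  · simp
  have hn : (#s : ℝ) ≠ 0 := by simp [hs.ne_empty]
  simp only [sub_sq, sum_add_distrib, sum_sub_distrib, ← sum_mul, ← mul_sum, sum_const,
    nsmul_eq_mul]
  field_simp
  ring

namespace ProbabilityTheory

theorem gaussianPDFReal_comm (μ : ℝ) (v : ℝ≥0) (x : ℝ) :
    gaussianPDFReal μ v x = gaussianPDFReal x v μ := by
  simp only [gaussianPDFReal, sub_sq_comm x μ]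

theorem log_gaussianPDFReal (μ : ℝ) {v : ℝ≥0} (hv : v ≠ 0) (x : ℝ) :
    log (gaussianPDFReal μ v x) = -(log (2 * π * v) + (x - μ) ^ 2 / v) / 2 := by
  have : (0 : ℝ) < v := by positivity
  rw [gaussianPDFReal, log_mul (by positivity) (exp_ne_zero _), log_inv, log_sqrt (by positivity),
    log_exp]
  field_simp
  ring

theorem gaussianPDFReal_mul_gaussianPDFReal (μ₁ μ₂ x : ℝ) {v₁ v₂ : ℝ≥0} (h₁ : v₁ ≠ 0)
    (h₂ : v₂ ≠ 0) :
    gaussianPDFReal μ₁ v₁ x * gaussianPDFReal μ₂ v₂ x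
      = gaussianPDFReal μ₁ (v₁ + v₂) μ₂
        * gaussianPDFReal ((v₂ * μ₁ + v₁ * μ₂) / (v₁ + v₂)) (v₁ * v₂ / (v₁ + v₂)) x := by
  have h₁' : (0 : ℝ) < v₁ := by positivity
  have h₂' : (0 : ℝ) < v₂ := by positivity
  simp only [gaussianPDFReal, NNReal.coe_add, NNReal.coe_mul, NNReal.coe_div]
  have hsqrt : (√(2 * π * v₁))⁻¹ * (√(2 * π * v₂))⁻¹
      = (√(2 * π * (v₁ + v₂)))⁻¹ * (√(2 * π * (v₁ * v₂ / (v₁ + v₂))))⁻¹ := by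
    rw [← mul_inv, ← mul_inv, ← sqrt_mul (by positivity), ← sqrt_mul (by positivity)]
    field_simp
  have hexp : rexp (-(x - μ₁) ^ 2 / (2 * v₁)) * rexp (-(x - μ₂) ^ 2 / (2 * v₂))
      = rexp (-(μ₂ - μ₁) ^ 2 / (2 * (v₁ + v₂)))
        * rexp (-(x - (v₂ * μ₁ + v₁ * μ₂) / (v₁ + v₂)) ^ 2 / (2 * (v₁ * v₂ / (v₁ + v₂)))) := by
    rw [← exp_add, ← exp_add]
    congr 1
    field_simp
    ring
  rw [mul_mul_mul_comm, hsqrt, hexp]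
  ring

theorem integral_gaussianPDFReal_mul_gaussianPDFReal (μ₁ μ₂ : ℝ) {v₁ v₂ : ℝ≥0} (h₁ : v₁ ≠ 0)
    (h₂ : v₂ ≠ 0) :
    ∫ x, gaussianPDFReal μ₁ v₁ x * gaussianPDFReal μ₂ v₂ x = gaussianPDFReal μ₁ (v₁ + v₂) μ₂ := by
  simp_rw [gaussianPDFReal_mul_gaussianPDFReal μ₁ μ₂ _ h₁ h₂]
  rw [integral_const_mul, integral_gaussianPDFReal_eq_one _ (by positivity), mul_one]

theorem gaussianPDFReal_affine_mean {a : ℝ} (ha : a ≠ 0) (b x z : ℝ) {v w : ℝ≥0}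
    (hvw : (v : ℝ) = a ^ 2 * w) :
    gaussianPDFReal (a * x + b) v z = |a|⁻¹ * gaussianPDFReal (a⁻¹ * (z - b)) w x := by
  rw [gaussianPDFReal_comm, gaussianPDFReal_add, gaussianPDFReal_mul ha, abs_inv]
  congr 2
  ext
  simp [hvw, ha]

theorem prod_gaussianPDFReal (s : Finset ι) (y : ι → ℝ) (μ : ℝ) (v : ℝ≥0) :
    ∏ i ∈ s, gaussianPDFReal μ v (y i)
      = (√(2 * π * v))⁻¹ ^ #s * rexp (-(∑ i ∈ s, (y i - μ) ^ 2) / (2 * v)) := by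
  simp only [gaussianPDFReal, prod_mul_distrib, prod_const, ← exp_sum, ← sum_div, sum_neg_distrib]

theorem prod_gaussianPDFReal_eq_mul_gaussianPDFReal_mean (s : Finset ι) (hs : s.Nonempty)
    (y : ι → ℝ) (μ : ℝ) {v : ℝ≥0} (hv : v ≠ 0) :
    ∏ i ∈ s, gaussianPDFReal μ v (y i)
      = (√(2 * π * v))⁻¹ ^ #s * √(2 * π * (v / #s : ℝ≥0))
          * rexp (-(∑ i ∈ s, y i ^ 2 - (#s : ℝ)⁻¹ * (∑ i ∈ s, y i) ^ 2) / (2 * v))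
          * gaussianPDFReal μ (v / #s) ((#s : ℝ)⁻¹ * ∑ i ∈ s, y i) := by
  have hn : (0 : ℝ) < #s := by exact_mod_cast card_pos.2 hs
  have hv' : (0 : ℝ) < v := by positivity
  have hsqrt : (0 : ℝ) < √(2 * π * (v / #s : ℝ≥0)) := by
    apply sqrt_pos.2
    push_cast
    positivity
  have hsplit : ∀ R d : ℝ, rexp (-(R + #s * d ^ 2) / (2 * v))
      = rexp (-R / (2 * v)) * rexp (-d ^ 2 / (2 * (v / #s : ℝ≥0))) := by
    intro R d
    rw [← exp_add]
    congr 1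
    push_cast
    field_simp
    ring
  rw [prod_gaussianPDFReal, Finset.sum_sub_sq_eq_add_card_mul, hsplit, gaussianPDFReal]
  field_simp

theorem integral_prod_gaussianPDFReal_affine_mul_gaussianPDFReal {a : ℝ} (ha : a ≠ 0) (b ν : ℝ)
    (s : Finset ι) (hs : s.Nonempty) (y : ι → ℝ) {v w τ : ℝ≥0} (hvw : (v : ℝ) = a ^ 2 * w)
    (hw : w ≠ 0) (hτ : τ ≠ 0) :
    ∫ x, (∏ i ∈ s, gaussianPDFReal (a * x + b) v (y i)) * gaussianPDFReal ν τ x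
      = (√(2 * π * v))⁻¹ ^ #s * √(2 * π * (v / #s : ℝ≥0))
          * rexp (-(∑ i ∈ s, y i ^ 2 - (#s : ℝ)⁻¹ * (∑ i ∈ s, y i) ^ 2) / (2 * v)) * |a|⁻¹
          * gaussianPDFReal (a⁻¹ * ((#s : ℝ)⁻¹ * ∑ i ∈ s, y i - b)) (w / #s + τ) ν := by
  have hv : v ≠ 0 := by
    rw [← NNReal.coe_ne_zero, hvw]
    positivity
  have hvw' : ((v / #s : ℝ≥0) : ℝ) = a ^ 2 * (w / #s : ℝ≥0) := by
    push_cast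
    rw [hvw, mul_div_assoc]
  simp only [prod_gaussianPDFReal_eq_mul_gaussianPDFReal_mean s hs y _ hv,
    gaussianPDFReal_affine_mean ha b _ _ hvw', mul_assoc, integral_const_mul,
    integral_gaussianPDFReal_mul_gaussianPDFReal _ _ (by positivity : w / #s ≠ 0) hτ]

end ProbabilityTheory

/-- Marginal log-density in the gain–offset model with Gaussian latent value: if
`X ~ N(ν, ζ)` and, given `X`, the observations `y₁, …, y_M` are i.i.d. `N(aX + b, a²ς²)`,
then the marginal log-density of `(y₁, …, y_M)` equals
`−(1/2)[M log 2π + (M−1) log(ς²a²) + log(a² M ζ + ς² a²) + ς⁻²a⁻²(s − M⁻¹g²)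
+ (ζ + ς²M⁻¹)⁻¹ (g̃ − ν)²]`, where `g = Σₘ yₘ`, `s = Σₘ yₘ²`, `g̃ = a⁻¹(M⁻¹g − b)`. -/
theorem marginal_log_density_gain_offset (M : ℕ) (hM : 1 ≤ M)
    (ν ζ a b ς : ℝ) (hζ : 0 < ζ) (ha : 0 < a) (hς : 0 < ς)
    (y : Fin M → ℝ) (g s gt : ℝ)
    (hg : g = ∑ m, y m) (hs : s = ∑ m, (y m) ^ 2)
    (hgt : gt = a⁻¹ * ((M : ℝ)⁻¹ * g - b)) :
    Real.log (∫ x : ℝ,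
        (∏ m, gaussianPDFReal (a * x + b) ((a ^ 2 * ς ^ 2).toNNReal) (y m))
          * gaussianPDFReal ν ζ.toNNReal x)
      = -(1 / 2) * ((M : ℝ) * Real.log (2 * Real.pi)
          + ((M : ℝ) - 1) * Real.log (ς ^ 2 * a ^ 2)
          + Real.log (a ^ 2 * (M : ℝ) * ζ + ς ^ 2 * a ^ 2)
          + (ς ^ 2)⁻¹ * (a ^ 2)⁻¹ * (s - (M : ℝ)⁻¹ * g ^ 2)
          + (ζ + ς ^ 2 * (M : ℝ)⁻¹)⁻¹ * (gt - ν) ^ 2) := by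
  have hM₀ : (0 : ℝ) < M := by exact_mod_cast hM
  have hς₀ : (ς ^ 2).toNNReal ≠ 0 := by positivity
  have hζ₀ : ζ.toNNReal ≠ 0 := by positivity
  have hvw : ((a ^ 2 * ς ^ 2).toNNReal : ℝ) = a ^ 2 * (ς ^ 2).toNNReal := by
    rw [Real.coe_toNNReal _ (by positivity), Real.coe_toNNReal _ (by positivity)]
  rw [integral_prod_gaussianPDFReal_affine_mul_gaussianPDFReal ha.ne' b ν univ
      (univ_nonempty_iff.2 ⟨⟨0, hM⟩⟩) y hvw hς₀ hζ₀, card_univ, Fintype.card_fin, ← hg, ← hs, ← hgt,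
    log_mul (by positivity) (gaussianPDFReal_pos _ _ _ (by positivity)).ne',
    log_gaussianPDFReal _ (by positivity)]
  simp only [NNReal.coe_add, NNReal.coe_div, NNReal.coe_natCast, Real.coe_toNNReal _ hζ.le,
    Real.coe_toNNReal _ (sq_nonneg ς), Real.coe_toNNReal _ (by positivity : 0 ≤ a ^ 2 * ς ^ 2)]
  have hlog : log (a ^ 2 * M * ζ + ς ^ 2 * a ^ 2) = log (a ^ 2) + log M + log (ς ^ 2 / M + ζ) := by
    rw [← log_mul (by positivity) (by positivity), ← log_mul (by positivity) (by positivity)]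
    congr 1
    field_simp
    ring
  simp (disch := positivity) only [hlog, log_mul, log_div, log_inv, log_pow, log_sqrt, log_exp,
    abs_of_pos ha]
  field_simp
  ring
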